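/- Let A₁,…,A_k ⊆ ℝ be compact sets with ∑ dim_B(A_j) < k − 1, where dim_B denotes upper box dimension. Then the set T = {(t₁,…,t_k) ∈ ℝ^k : (A₁ + t₁) ∩ (A₂ + t₂) ∩ ⋯ ∩ (A_k + t_k) ≠ ∅} has k-dimensional Lebesgue measure zero. -/

import Mathlib

/-! If `x` lies in every `A j + t j`, pick `g` in an `ε`-net of the range of `x` and `p j` in an
`ε`-net of `A j`; then every `t j` is within `2ε` of `g - p j`. Since `N(A j, ε) ≤ ε^(-d j)` with
`∑ d j < k - 1`, these `O(ε⁻¹ ∏ j, N(A j, ε))` cubes of side `4ε` have total volume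
`O(ε^(k - 1 - ∑ d j)) → 0`. -/

open Filter Set

/-- Minimal number of `ε`-balls needed to cover `A` (covering number). -/
noncomputable def coverNum {α : Type*} [PseudoMetricSpace α] (A : Set α) (ε : ℝ) : ℕ :=
  sInf {n | ∃ s : Finset α, s.card = n ∧ A ⊆ ⋃ x ∈ s, Metric.ball x ε}

/-- Upper box dimension (limit capacity) of a set in a metric space. -/
noncomputable def ubDim {α : Type*} [PseudoMetricSpace α] (A : Set α) : ℝ :=
  Filter.limsup (fun ε : ℝ => Real.log (coverNum A ε) / Real.log (1 / ε))
    (nhdsWithin 0 (Set.Ioi 0))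

open MeasureTheory Bornology Topology

section CoverNum

variable {α : Type*} [PseudoMetricSpace α] {A B : Set α} {ε : ℝ}

lemma coverNum_le_card {s : Finset α} (h : A ⊆ ⋃ x ∈ s, Metric.ball x ε) :
    coverNum A ε ≤ s.card :=
  Nat.sInf_le ⟨s, rfl, h⟩

lemma TotallyBounded.exists_finset_card_eq_coverNum (hA : TotallyBounded A) (hε : 0 < ε) :
    ∃ s : Finset α, s.card = coverNum A ε ∧ A ⊆ ⋃ x ∈ s, Metric.ball x ε := by
  obtain ⟨t, ht, hcov⟩ := Metric.totallyBounded_iff.1 hA ε hε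
  exact Nat.sInf_mem (s := {n | ∃ s : Finset α, s.card = n ∧ A ⊆ ⋃ x ∈ s, Metric.ball x ε})
    ⟨_, ht.toFinset, rfl, by simpa using hcov⟩

lemma coverNum_mono (h : A ⊆ B) (hB : TotallyBounded B) (hε : 0 < ε) :
    coverNum A ε ≤ coverNum B ε := by
  obtain ⟨s, hs, hcov⟩ := hB.exists_finset_card_eq_coverNum hε
  exact hs ▸ coverNum_le_card (h.trans hcov)

end CoverNum

lemma coverNum_Icc_le {a b ε : ℝ} (hab : a ≤ b) (hε : 0 < ε) :
    (coverNum (Icc a b) ε : ℝ) ≤ (b - a) / ε + 1 := by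
  set m := ⌊(b - a) / ε⌋₊
  have hcov : Icc a b ⊆ ⋃ x ∈ (Finset.range (m + 1)).image (fun i : ℕ => a + ε * i),
      Metric.ball x ε := by
    rintro y ⟨hay, hyb⟩
    have hi : ⌊(y - a) / ε⌋₊ ∈ Finset.range (m + 1) :=
      Finset.mem_range_succ_iff.2 (Nat.floor_le_floor (by gcongr))
    refine mem_iUnion₂.2 ⟨_, Finset.mem_image_of_mem _ hi, ?_⟩
    have h1 := (le_div_iff₀ hε).1 (Nat.floor_le (div_nonneg (sub_nonneg.2 hay) hε.le))
    have h2 := (div_lt_iff₀ hε).1 (Nat.lt_floor_add_one ((y - a) / ε))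
    rw [Metric.mem_ball, Real.dist_eq, abs_lt]
    constructor <;> linarith
  calc (coverNum (Icc a b) ε : ℝ) ≤ (m + 1 : ℕ) := by
        exact_mod_cast (coverNum_le_card hcov).trans
          (Finset.card_image_le.trans (Finset.card_range _).le)
    _ ≤ (b - a) / ε + 1 := by
        push_cast
        gcongr
        exact Nat.floor_le (div_nonneg (sub_nonneg.2 hab) hε.le)

lemma Bornology.IsBounded.totallyBounded {α : Type*} [PseudoMetricSpace α] [ProperSpace α]
    {A : Set α} (hA : IsBounded A) : TotallyBounded A :=
  hA.isCompact_closure.totallyBounded.subset subset_closure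

lemma Bornology.IsBounded.exists_coverNum_le {A : Set ℝ} (hA : IsBounded A) :
    ∃ C, 0 ≤ C ∧ ∀ ε ∈ Ioc (0 : ℝ) 1, (coverNum A ε : ℝ) ≤ C / ε := by
  obtain ⟨r, hr, hAr⟩ := hA.subset_closedBall_lt 0 0
  refine ⟨2 * r + 1, by positivity, fun ε ⟨hε0, hε1⟩ => ?_⟩
  rw [Real.closedBall_eq_Icc, zero_sub, zero_add] at hAr
  calc (coverNum A ε : ℝ) ≤ coverNum (Icc (-r) r) ε := by
        exact_mod_cast coverNum_mono hAr (totallyBounded_Icc _ _) hε0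
    _ ≤ (r - -r) / ε + 1 := coverNum_Icc_le (by linarith) hε0
    _ ≤ (2 * r + 1) / ε := by
        rw [add_div, sub_neg_eq_add, ← two_mul]
        gcongr
        exact (one_le_div hε0).2 hε1

lemma Bornology.IsBounded.isBoundedUnder_log_coverNum {A : Set ℝ} (hA : IsBounded A) :
    IsBoundedUnder (· ≤ ·) (𝓝[>] 0) (fun ε => Real.log (coverNum A ε) / Real.log (1 / ε)) := by
  obtain ⟨C, hC0, hC⟩ := hA.exists_coverNum_le
  refine isBoundedUnder_of_eventually_le (a := 2) ?_
  filter_upwards [Ioo_mem_nhdsGT (show (0 : ℝ) < min 1 (1 / (C + 1)) by positivity)]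
    with ε ⟨hε0, hε⟩
  have hε1 : ε < 1 := hε.trans_le (min_le_left _ _)
  have hεC : ε * (C + 1) < 1 := (lt_div_iff₀ (by positivity)).1 (hε.trans_le (min_le_right _ _))
  have hlog : 0 < Real.log (1 / ε) := Real.log_pos ((one_lt_div hε0).2 hε1)
  rw [div_le_iff₀ hlog]
  rcases (coverNum A ε).eq_zero_or_pos with h0 | hpos
  · simp only [h0, Nat.cast_zero, Real.log_zero]
    positivity
  · calc Real.log (coverNum A ε) ≤ Real.log ((1 / ε) ^ 2) := by
          refine Real.log_le_log (by exact_mod_cast hpos) ((hC ε ⟨hε0, hε1.le⟩).trans ?_)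
          rw [div_pow, one_pow, div_le_div_iff₀ hε0 (by positivity)]
          nlinarith
      _ = 2 * Real.log (1 / ε) := by rw [Real.log_pow, Nat.cast_ofNat]

lemma Bornology.IsBounded.eventually_coverNum_le_rpow {A : Set ℝ} (hA : IsBounded A) {d : ℝ}
    (hd : ubDim A < d) : ∀ᶠ ε in 𝓝[>] 0, (coverNum A ε : ℝ) ≤ ε ^ (-d) := by
  filter_upwards [eventually_lt_of_limsup_lt hd hA.isBoundedUnder_log_coverNum,
    Ioo_mem_nhdsGT one_pos] with ε hlt ⟨hε0, hε1⟩
  have hlog : 0 < Real.log (1 / ε) := Real.log_pos ((one_lt_div hε0).2 hε1)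
  rcases (coverNum A ε).eq_zero_or_pos with h0 | hpos
  · simp only [h0, Nat.cast_zero]
    positivity
  · rw [← Real.log_le_log_iff (by exact_mod_cast hpos) (by positivity), Real.log_rpow hε0]
    rw [div_lt_iff₀ hlog, one_div, Real.log_inv] at hlt
    linarith

lemma volume_setOf_exists_forall_sub_mem_le {ι : Type*} [Fintype ι] {B : Set ℝ}
    {A : ι → Set ℝ} (hB : TotallyBounded B) (hA : ∀ j, TotallyBounded (A j)) {ε : ℝ}
    (hε : 0 < ε) :
    volume {t : ι → ℝ | ∃ x ∈ B, ∀ j, x - t j ∈ A j} ≤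
      ENNReal.ofReal (coverNum B ε * (∏ j, (coverNum (A j) ε : ℝ)) * (4 * ε) ^ Fintype.card ι) := by
  classical
  obtain ⟨g, hg, hBg⟩ := hB.exists_finset_card_eq_coverNum hε
  choose c hc hAc using fun j => (hA j).exists_finset_card_eq_coverNum hε
  have hsub : {t : ι → ℝ | ∃ x ∈ B, ∀ j, x - t j ∈ A j} ⊆
      ⋃ y ∈ g, ⋃ p ∈ Fintype.piFinset c, univ.pi fun j => Metric.ball (y - p j) (2 * ε) := by
    rintro t ⟨x, hx, hxt⟩
    obtain ⟨y, hy, hxy⟩ := mem_iUnion₂.1 (hBg hx)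
    choose p hp hpt using fun j => mem_iUnion₂.1 (hAc j (hxt j))
    refine mem_iUnion₂.2 ⟨y, hy, mem_iUnion₂.2 ⟨p, Fintype.mem_piFinset.2 hp, fun j _ => ?_⟩⟩
    have hpj := hpt j
    rw [Metric.mem_ball, Real.dist_eq] at hxy hpj ⊢
    calc |t j - (y - p j)| = |(x - y) - (x - t j - p j)| := by ring_nf
      _ ≤ |x - y| + |x - t j - p j| := abs_sub _ _
      _ < 2 * ε := by linarith
  calc volume {t : ι → ℝ | ∃ x ∈ B, ∀ j, x - t j ∈ A j}
      ≤ ∑ y ∈ g, ∑ p ∈ Fintype.piFinset c,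
          volume (univ.pi fun j => Metric.ball (y - p j) (2 * ε)) :=
        (measure_mono hsub).trans <| (measure_biUnion_finset_le _ _).trans <|
          Finset.sum_le_sum fun _ _ => measure_biUnion_finset_le _ _
    _ = ENNReal.ofReal
          (coverNum B ε * (∏ j, (coverNum (A j) ε : ℝ)) * (4 * ε) ^ Fintype.card ι) := by
        simp only [volume_pi_pi, Real.volume_ball, Finset.prod_const, Finset.card_univ,
          Finset.sum_const, Fintype.card_piFinset, nsmul_eq_mul, hg, hc]
        conv_rhs => rw [← Nat.cast_prod, ENNReal.ofReal_mul (by positivity),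
          ENNReal.ofReal_mul (by positivity), ENNReal.ofReal_natCast, ENNReal.ofReal_natCast,
          ENNReal.ofReal_pow (by positivity), show 4 * ε = 2 * (2 * ε) by ring]
        rw [mul_assoc]

lemma measure_eq_zero_of_eventually_le_rpow {X : Type*} [MeasurableSpace X] {μ : Measure X}
    {s : Set X} {C e : ℝ} (he : 0 < e)
    (h : ∀ᶠ ε in 𝓝[>] 0, μ s ≤ ENNReal.ofReal (C * ε ^ e)) : μ s = 0 := by
  have hlim : Tendsto (fun ε : ℝ => ENNReal.ofReal (C * ε ^ e)) (𝓝[>] 0) (𝓝 0) := by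
    have := ENNReal.tendsto_ofReal
      ((Real.continuousAt_rpow_const 0 e (Or.inr he.le)).tendsto.const_mul C)
    rw [Real.zero_rpow he.ne', mul_zero, ENNReal.ofReal_zero] at this
    exact this.mono_left nhdsWithin_le_nhds
  exact nonpos_iff_eq_zero.1 (ge_of_tendsto hlim h)

lemma exists_forall_lt_sum_lt {ι : Type*} [Fintype ι] {f : ι → ℝ} {c : ℝ}
    (h : ∑ j, f j < c) : ∃ d : ι → ℝ, (∀ j, f j < d j) ∧ ∑ j, d j < c := by
  set δ := (c - ∑ j, f j) / (Fintype.card ι + 1)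
  have hδ : 0 < δ := div_pos (sub_pos.2 h) (by positivity)
  have hcardδ : (Fintype.card ι + 1) * δ = c - ∑ j, f j := mul_div_cancel₀ _ (by positivity)
  refine ⟨fun j => f j + δ, fun j => by linarith, ?_⟩
  rw [Finset.sum_add_distrib, Finset.sum_const, Finset.card_univ, nsmul_eq_mul]
  linarith

lemma volume_setOf_exists_forall_sub_mem_eq_zero {ι : Type*} [Fintype ι] {B : Set ℝ}
    {A : ι → Set ℝ} (hB : IsBounded B) (hA : ∀ j, IsBounded (A j))
    (hdim : ∑ j, ubDim (A j) < Fintype.card ι - 1) :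
    volume {t : ι → ℝ | ∃ x ∈ B, ∀ j, x - t j ∈ A j} = 0 := by
  obtain ⟨d, hd, hdsum⟩ := exists_forall_lt_sum_lt hdim
  obtain ⟨C, hC0, hC⟩ := hB.exists_coverNum_le
  refine measure_eq_zero_of_eventually_le_rpow (C := C * 4 ^ Fintype.card ι)
    (sub_pos.2 hdsum) ?_
  filter_upwards [eventually_all.2 fun j => (hA j).eventually_coverNum_le_rpow (hd j),
    Ioc_mem_nhdsGT one_pos] with ε hN ⟨hε0, hε1⟩
  refine (volume_setOf_exists_forall_sub_mem_le hB.totallyBounded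
    (fun j => (hA j).totallyBounded) hε0).trans (ENNReal.ofReal_le_ofReal ?_)
  have hprod : ∏ j, (coverNum (A j) ε : ℝ) ≤ ε ^ (-∑ j, d j) := by
    rw [← Finset.sum_neg_distrib, Real.rpow_sum_of_pos hε0]
    exact Finset.prod_le_prod (fun _ _ => Nat.cast_nonneg _) fun j _ => hN j
  calc (coverNum B ε : ℝ) * (∏ j, (coverNum (A j) ε : ℝ)) * (4 * ε) ^ Fintype.card ι
      ≤ C / ε * ε ^ (-∑ j, d j) * (4 * ε) ^ Fintype.card ι := by
        gcongr
        exact hC ε ⟨hε0, hε1⟩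
    _ = C * 4 ^ Fintype.card ι * ε ^ (Fintype.card ι - 1 - ∑ j, d j) := by
        rw [Real.rpow_sub hε0, Real.rpow_sub hε0, Real.rpow_natCast, Real.rpow_one,
          Real.rpow_neg hε0.le]
        field_simp
        ring

theorem stmt_1_general (k : ℕ) (A : Fin k → Set ℝ) (hA : ∀ j, IsCompact (A j))
    (hdim : ∑ j, ubDim (A j) < (k : ℝ) - 1) :
    MeasureTheory.volume
      {t : Fin k → ℝ | (⋂ j, (fun a => a + t j) '' A j).Nonempty} = 0 := by
  have hcover : {t : Fin k → ℝ | (⋂ j, (fun a => a + t j) '' A j).Nonempty} ⊆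
      ⋃ n : ℕ, {t | ∃ x ∈ Icc (-n : ℝ) n, ∀ j, x - t j ∈ A j} := by
    rintro t ⟨x, hx⟩
    refine mem_iUnion.2 ⟨⌈|x|⌉₊, x, abs_le.1 (Nat.le_ceil _), fun j => ?_⟩
    obtain ⟨a, ha, rfl⟩ := mem_iInter.1 hx j
    simpa using ha
  refine measure_mono_null hcover (measure_iUnion_null fun n => ?_)
  exact volume_setOf_exists_forall_sub_mem_eq_zero (Metric.isBounded_Icc _ _)
    (fun j => (hA j).isBounded) (by simpa using hdim)

/-- If `A₁, …, A_k ⊆ ℝ` are compact with `∑ dim_B(A_j) < k - 1`, then the set of translation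
vectors `(t₁,…,t_k)` for which `(A₁+t₁) ∩ ⋯ ∩ (A_k+t_k) ≠ ∅` has `k`-dimensional Lebesgue
measure zero. -/
theorem stmt_1 (k : ℕ) (hk : 2 ≤ k) (A : Fin k → Set ℝ) (hA : ∀ j, IsCompact (A j))
    (hdim : ∑ j, ubDim (A j) < (k : ℝ) - 1) :
    MeasureTheory.volume
      {t : Fin k → ℝ | (⋂ j, (fun a => a + t j) '' A j).Nonempty} = 0 :=
  stmt_1_general k A hA hdim
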